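/- Let n ≥ 6 be even and suppose A₁,…,A_n, {X_{uv}} are Pauli-string observables satisfying: all A_v pairwise commute; X_{uv}X_{st}X_{vs}X_{ut}X_{su}X_{vt} = ±I for all quadruples of distinct vertices (as enforced by the b-type triple constraints); and the derived relations force X_{uv} ∈ {±X} for a single fixed Pauli string X for all edges (u,v). Then for all distinct u,v,s,t, A_u A_v A_s A_t = I, hence all A_v are equal; consequently Π_{v=1}^n A_v = A₁ⁿ = I ≠ −I, so no Pauli-string solution of the permutation-graph BCS with Π_v A_v = −I exists. -/
import Mathlib

open Matrix

noncomputable def pauli : Fin 4 → Matrix (Fin 2) (Fin 2) ℂ :=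
  ![1, !![0, 1; 1, 0], !![0, -Complex.I; Complex.I, 0], !![1, 0; 0, -1]]

/-- An `m`-qubit Pauli string: a sign `±1` times a tensor product of Pauli matrices. -/
def IsPauliString {m : ℕ} (A : Matrix (Fin m → Fin 2) (Fin m → Fin 2) ℂ) : Prop :=
  ∃ (s : ℂ) (f : Fin m → Fin 4), (s = 1 ∨ s = -1) ∧
    ∀ x y : Fin m → Fin 2, A x y = s * ∏ i, pauli (f i) (x i) (y i)

/-- Four pairwise distinct vertices. -/
def Dist4 {n : ℕ} (u v s t : Fin n) : Prop :=
  u ≠ v ∧ u ≠ s ∧ u ≠ t ∧ v ≠ s ∧ v ≠ t ∧ s ≠ t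

/- ## Auxiliary Pauli-string machinery -/

def mul4 : Fin 4 → Fin 4 → Fin 4 :=
  ![![0,1,2,3], ![1,0,3,2], ![2,3,0,1], ![3,2,1,0]]

noncomputable def ph : Fin 4 → Fin 4 → ℂ :=
  ![![1,1,1,1], ![1,1,Complex.I,-Complex.I], ![1,-Complex.I,1,Complex.I],
    ![1,Complex.I,-Complex.I,1]]

theorem pauli_mul (a b : Fin 4) : pauli a * pauli b = ph a b • pauli (mul4 a b) := by
  fin_cases a <;> fin_cases b <;>
    · ext i j
      fin_cases i <;> fin_cases j <;>
        simp [pauli, mul4, ph, Matrix.mul_apply, Fin.sum_univ_two, Matrix.one_apply,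
          Complex.ext_iff, Matrix.vecHead, Matrix.vecTail]

noncomputable def Pstr {m : ℕ} (f : Fin m → Fin 4) :
    Matrix (Fin m → Fin 2) (Fin m → Fin 2) ℂ :=
  fun x y => ∏ i, pauli (f i) (x i) (y i)

theorem Pstr_mul {m : ℕ} (f g : Fin m → Fin 4) :
    Pstr f * Pstr g = (∏ i, ph (f i) (g i)) • Pstr (fun i => mul4 (f i) (g i)) := by
  ext x y
  rw [Matrix.mul_apply, Matrix.smul_apply]
  have h1 : ∀ z : Fin m → Fin 2, Pstr f x z * Pstr g z y
      = ∏ i, (pauli (f i) (x i) (z i) * pauli (g i) (z i) (y i)) := by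
    intro z; rw [Pstr, Pstr, Finset.prod_mul_distrib]
  simp only [h1]
  have h2 : ∀ i : Fin m, ∑ j : Fin 2, pauli (f i) (x i) j * pauli (g i) j (y i)
      = ph (f i) (g i) * pauli (mul4 (f i) (g i)) (x i) (y i) := by
    intro i
    rw [← Matrix.mul_apply, pauli_mul, Matrix.smul_apply, smul_eq_mul]
  calc ∑ z : Fin m → Fin 2, ∏ i, (pauli (f i) (x i) (z i) * pauli (g i) (z i) (y i))
      = ∏ i, ∑ j : Fin 2, pauli (f i) (x i) j * pauli (g i) j (y i) := by
        rw [Finset.prod_univ_sum (fun _ => (Finset.univ : Finset (Fin 2)))]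
        rw [Fintype.piFinset_univ]
    _ = ∏ i, (ph (f i) (g i) * pauli (mul4 (f i) (g i)) (x i) (y i)) :=
        Finset.prod_congr rfl fun i _ => h2 i
    _ = (∏ i, ph (f i) (g i)) • Pstr (fun i => mul4 (f i) (g i)) x y := by
        rw [Finset.prod_mul_distrib]; rfl

theorem Pstr_zero {m : ℕ} : Pstr (fun _ : Fin m => (0 : Fin 4)) = 1 := by
  ext x y
  simp only [Pstr]
  by_cases h : x = y
  · subst h
    rw [Matrix.one_apply_eq]
    apply Finset.prod_eq_one
    intro i _
    show pauli 0 (x i) (x i) = 1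
    have : pauli 0 = (1 : Matrix (Fin 2) (Fin 2) ℂ) := rfl
    rw [this, Matrix.one_apply_eq]
  · rw [Matrix.one_apply_ne h]
    obtain ⟨i, hi⟩ : ∃ i, x i ≠ y i := Function.ne_iff.mp h
    apply Finset.prod_eq_zero (Finset.mem_univ i)
    show pauli 0 (x i) (y i) = 0
    exact Matrix.one_apply_ne hi

theorem trace_pauli (k : Fin 4) : ∑ j : Fin 2, pauli k j j = if k = 0 then 2 else 0 := by
  fin_cases k <;> simp [pauli, Fin.sum_univ_two, Matrix.one_apply]

theorem trace_Pstr {m : ℕ} (h : Fin m → Fin 4) :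
    Matrix.trace (Pstr h) = ∏ i, (if h i = 0 then (2:ℂ) else 0) := by
  rw [Matrix.trace]
  calc ∑ x : Fin m → Fin 2, Matrix.diag (Pstr h) x
      = ∑ x : Fin m → Fin 2, ∏ i, pauli (h i) (x i) (x i) := rfl
    _ = ∏ i, ∑ j : Fin 2, pauli (h i) j j := by
        rw [Finset.prod_univ_sum (fun _ => (Finset.univ : Finset (Fin 2)))]
        rw [Fintype.piFinset_univ]
    _ = _ := Finset.prod_congr rfl fun i _ => trace_pauli (h i)

theorem ph_self (a : Fin 4) : ph a a = 1 := by fin_cases a <;> simp [ph]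

theorem mul4_self : ∀ a : Fin 4, mul4 a a = 0 := by decide

theorem mul4_eq_zero {a b : Fin 4} : mul4 a b = 0 ↔ a = b := by revert a b; decide

theorem Pstr_sq {m : ℕ} (f : Fin m → Fin 4) : Pstr f * Pstr f = 1 := by
  rw [Pstr_mul]
  have h1 : (∏ i, ph (f i) (f i)) = 1 := Finset.prod_eq_one fun i _ => ph_self (f i)
  have h2 : (fun i => mul4 (f i) (f i)) = (fun _ : Fin m => (0 : Fin 4)) := by
    funext i; exact mul4_self (f i)
  rw [h1, h2, Pstr_zero, one_smul]

theorem Pstr_unique {m : ℕ} {s t : ℂ} {f g : Fin m → Fin 4}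
    (h : s • Pstr f = t • Pstr g) (ht : t ≠ 0) : f = g := by
  by_contra hfg
  obtain ⟨i, hi⟩ : ∃ i, f i ≠ g i := Function.ne_iff.mp hfg
  have h2 : s • (Pstr f * Pstr g) = t • (Pstr g * Pstr g) := by
    rw [← smul_mul_assoc, ← smul_mul_assoc, h]
  rw [Pstr_sq, Pstr_mul, smul_smul] at h2
  have h3 := congrArg Matrix.trace h2
  rw [Matrix.trace_smul, Matrix.trace_smul, trace_Pstr, Matrix.trace_one] at h3
  have h4 : ∏ j, (if mul4 (f j) (g j) = 0 then (2:ℂ) else 0) = 0 :=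
    Finset.prod_eq_zero (Finset.mem_univ i) (by
      rw [if_neg]; exact fun hc => hi (mul4_eq_zero.mp hc))
  rw [h4] at h3
  simp only [smul_eq_mul, mul_zero] at h3
  have h5 : (Fintype.card (Fin m → Fin 2) : ℂ) ≠ 0 :=
    Nat.cast_ne_zero.mpr Fintype.card_ne_zero
  rcases mul_eq_zero.mp h3.symm with h | h
  · exact ht h
  · exact h5 h

theorem pauliRepr {m : ℕ} {A : Matrix (Fin m → Fin 2) (Fin m → Fin 2) ℂ}
    (h : IsPauliString A) : ∃ (s : ℂ) (f : Fin m → Fin 4),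
      (s = 1 ∨ s = -1) ∧ A = s • Pstr f := by
  obtain ⟨s, f, hs, hA⟩ := h
  exact ⟨s, f, hs, by ext x y; rw [Matrix.smul_apply, smul_eq_mul, hA x y]; rfl⟩

theorem smul_Pstr_mul {m : ℕ} (s t : ℂ) (f g : Fin m → Fin 4) :
    (s • Pstr f) * (t • Pstr g)
      = (s * t * ∏ i, ph (f i) (g i)) • Pstr (fun i => mul4 (f i) (g i)) := by
  rw [smul_mul_assoc, mul_smul_comm, Pstr_mul, smul_smul, smul_smul, mul_assoc]

/- W-level bookkeeping: the Pauli group modulo phase -/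

def toW : Fin 4 → ZMod 2 × ZMod 2 := ![(0,0), (1,0), (1,1), (0,1)]

theorem toW_mul4 : ∀ a b : Fin 4, toW (mul4 a b) = toW a + toW b := by decide

theorem toW_eq_zero : ∀ a : Fin 4, toW a = 0 ↔ a = 0 := by decide

def wOf {m : ℕ} (f : Fin m → Fin 4) : Fin m → ZMod 2 × ZMod 2 := fun i => toW (f i)

theorem wOf_add_self {m : ℕ} (w : Fin m → ZMod 2 × ZMod 2) : w + w = 0 := by
  have h : ∀ z : ZMod 2 × ZMod 2, z + z = 0 := by decide
  funext i
  exact h (w i)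

theorem char2_solve3 {m : ℕ} {A B C : Fin m → ZMod 2 × ZMod 2}
    (h : A + B + C = 0) : C = A + B := by
  have hn : -(A + B) = A + B := neg_eq_of_add_eq_zero_left (wOf_add_self (A + B))
  rw [← hn]
  exact eq_neg_of_add_eq_zero_right h

theorem triple_W {m : ℕ} {A B C : Matrix (Fin m → Fin 2) (Fin m → Fin 2) ℂ}
    {sA sB sC : ℂ} {fA fB fC : Fin m → Fin 4}
    (hA : A = sA • Pstr fA) (hB : B = sB • Pstr fB) (hC : C = sC • Pstr fC)
    (h : A * B * C = 1) : wOf fA + wOf fB + wOf fC = 0 := by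
  rw [hA, hB, hC, smul_Pstr_mul, smul_Pstr_mul] at h
  have h1 : (1 : Matrix (Fin m → Fin 2) (Fin m → Fin 2) ℂ)
      = (1 : ℂ) • Pstr (fun _ : Fin m => (0 : Fin 4)) := by rw [Pstr_zero, one_smul]
  rw [h1] at h
  have h2 := Pstr_unique h one_ne_zero
  funext i
  have h3 := congrFun h2 i
  show toW (fA i) + toW (fB i) + toW (fC i) = 0
  rw [← toW_mul4, ← toW_mul4, h3]
  rfl

theorem pauli_str_sq {m : ℕ} {A : Matrix (Fin m → Fin 2) (Fin m → Fin 2) ℂ}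
    (h : IsPauliString A) : A * A = 1 := by
  obtain ⟨s, f, hs, hA⟩ := pauliRepr h
  rw [hA, smul_mul_assoc, mul_smul_comm, Pstr_sq, smul_smul]
  have : s * s = 1 := by rcases hs with h | h <;> rw [h] <;> norm_num
  rw [this, one_smul]

/-- picking 3 fresh vertices -/
theorem pick3 {n : ℕ} (hn : 6 ≤ n) (p q : Fin n) :
    ∃ u v s : Fin n, u ≠ v ∧ u ≠ s ∧ v ≠ s ∧
      u ≠ p ∧ u ≠ q ∧ v ≠ p ∧ v ≠ q ∧ s ≠ p ∧ s ≠ q := by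
  classical
  set S : Finset (Fin n) := Finset.univ \ {p, q} with hS
  have hcard : 3 ≤ S.card := by
    have h1 : S.card = n - ({p, q} : Finset (Fin n)).card := by
      rw [hS, Finset.card_sdiff_of_subset (Finset.subset_univ _), Finset.card_univ, Fintype.card_fin]
    have h2 : ({p, q} : Finset (Fin n)).card ≤ 2 :=
      le_trans (Finset.card_insert_le _ _) (by simp)
    omega
  obtain ⟨u, hu⟩ := Finset.card_pos.mp (by omega : 0 < S.card)
  have hcard2 : 2 ≤ (S.erase u).card := by
    have := Finset.card_erase_of_mem hu; omega
  obtain ⟨v, hv⟩ := Finset.card_pos.mp (by omega : 0 < (S.erase u).card)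
  have hcard3 : 1 ≤ ((S.erase u).erase v).card := by
    have := Finset.card_erase_of_mem hv; omega
  obtain ⟨s, hs⟩ := Finset.card_pos.mp (by omega : 0 < ((S.erase u).erase v).card)
  have hvS := Finset.mem_of_mem_erase hv
  have hsS := Finset.mem_of_mem_erase (Finset.mem_of_mem_erase hs)
  have hmem : ∀ w : Fin n, w ∈ S → w ≠ p ∧ w ≠ q := by
    intro w hw
    rw [hS, Finset.mem_sdiff, Finset.mem_insert, Finset.mem_singleton] at hw
    constructor <;> intro hc <;> exact hw.2 (by simp [hc])
  refine ⟨u, v, s, ?_, ?_, ?_, (hmem u hu).1, (hmem u hu).2,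
    (hmem v hvS).1, (hmem v hvS).2, (hmem s hsS).1, (hmem s hsS).2⟩
  · exact fun hc => (Finset.ne_of_mem_erase hv) hc.symm
  · exact fun hc => (Finset.ne_of_mem_erase (Finset.mem_of_mem_erase hs)) hc.symm
  · exact fun hc => (Finset.ne_of_mem_erase hs) hc.symm
theorem dist4_perm1 {n : ℕ} {u v s t : Fin n} (h : Dist4 u v s t) : Dist4 v s u t := by
  obtain ⟨h1, h2, h3, h4, h5, h6⟩ := h
  exact ⟨h4, h1.symm, h5, h2.symm, h6, h3⟩

theorem dist4_perm2 {n : ℕ} {u v s t : Fin n} (h : Dist4 u v s t) : Dist4 s u v t := by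
  obtain ⟨h1, h2, h3, h4, h5, h6⟩ := h
  exact ⟨h2.symm, h4.symm, h6, h1, h3, h5⟩

/-- For even `n ≥ 6` the permutation-graph BCS on the complete graph with `n`
vertices has no Pauli-string solution: there is no assignment of `m`-qubit
Pauli strings to the variables `a, x, y, z, b, c` satisfying all constraints
(with variables in a common constraint commuting) and `Π_v a_v = −I`. -/
theorem stmt13 (n : ℕ) (hn : 6 ≤ n) (heven : Even n) :
    ¬ ∃ (m : ℕ) (a : Fin n → Matrix (Fin m → Fin 2) (Fin m → Fin 2) ℂ)
        (x y z : Fin n → Fin n → Matrix (Fin m → Fin 2) (Fin m → Fin 2) ℂ)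
        (b c : Fin n → Fin n → Fin n → Fin n →
          Matrix (Fin m → Fin 2) (Fin m → Fin 2) ℂ),
      (∀ v, IsPauliString (a v)) ∧
      (∀ u v, IsPauliString (x u v) ∧ IsPauliString (y u v) ∧ IsPauliString (z u v)) ∧
      (∀ u v s t, IsPauliString (b u v s t) ∧ IsPauliString (c u v s t)) ∧
      -- constraints
      (∀ u v, u ≠ v → a u * a v * y u v = 1) ∧
      (∀ u v, u ≠ v → x u v * y u v * z u v = 1) ∧
      (∀ u v s t, Dist4 u v s t → x u v * x s t * b u v s t = 1) ∧
      (∀ u v s t, Dist4 u v s t → x u v * z s t * c u v s t = 1) ∧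
      (∀ u v s t, Dist4 u v s t → b u v s t * b v s u t * b s u v t = 1) ∧
      (∀ u v s t, Dist4 u v s t → c u v s t * c v s u t * c s u v t = 1) ∧
      ((List.ofFn fun v : Fin n => a v).prod = -1) ∧
      -- variables appearing in a common constraint commute
      (∀ u v, Commute (a u) (a v)) ∧
      (∀ u v, u ≠ v → Commute (a u) (y u v) ∧ Commute (a v) (y u v)) ∧
      (∀ u v, u ≠ v → Commute (x u v) (y u v) ∧ Commute (x u v) (z u v) ∧
        Commute (y u v) (z u v)) ∧
      (∀ u v s t, Dist4 u v s t → Commute (x u v) (x s t) ∧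
        Commute (x u v) (b u v s t) ∧ Commute (x s t) (b u v s t)) ∧
      (∀ u v s t, Dist4 u v s t → Commute (x u v) (z s t) ∧
        Commute (x u v) (c u v s t) ∧ Commute (z s t) (c u v s t)) ∧
      (∀ u v s t, Dist4 u v s t → Commute (b u v s t) (b v s u t) ∧
        Commute (b u v s t) (b s u v t) ∧ Commute (b v s u t) (b s u v t)) ∧
      (∀ u v s t, Dist4 u v s t → Commute (c u v s t) (c v s u t) ∧
        Commute (c u v s t) (c s u v t) ∧ Commute (c v s u t) (c s u v t)) := by
  rintro ⟨m, a, x, y, z, b, c, hPa, hPxyz, hPbc, hay, hxyz, hxb, hxc, hbbb, hccc,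
    hprod, hcaa, -, -, -, -, -, -⟩
  classical
  choose sa fa hsa ha using fun v => pauliRepr (hPa v)
  choose sx fx hsx hx using fun u v => pauliRepr (hPxyz u v).1
  choose sy fy hsy hy using fun u v => pauliRepr (hPxyz u v).2.1
  choose sz fz hsz hz using fun u v => pauliRepr (hPxyz u v).2.2
  choose sb fb hsb hb using fun u v s t => pauliRepr (hPbc u v s t).1
  choose sc fc hsc hc using fun u v s t => pauliRepr (hPbc u v s t).2
  -- W-level equations
  have E1 : ∀ u v, u ≠ v → wOf (fy u v) = wOf (fa u) + wOf (fa v) := fun u v h =>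
    char2_solve3 (triple_W (ha u) (ha v) (hy u v) (hay u v h))
  have E2 : ∀ u v, u ≠ v → wOf (fz u v) = wOf (fx u v) + wOf (fy u v) := fun u v h =>
    char2_solve3 (triple_W (hx u v) (hy u v) (hz u v) (hxyz u v h))
  have E3 : ∀ u v s t, Dist4 u v s t → wOf (fb u v s t) = wOf (fx u v) + wOf (fx s t) :=
    fun u v s t h => char2_solve3 (triple_W (hx u v) (hx s t) (hb u v s t) (hxb u v s t h))
  have E4 : ∀ u v s t, Dist4 u v s t → wOf (fc u v s t) = wOf (fx u v) + wOf (fz s t) :=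
    fun u v s t h => char2_solve3 (triple_W (hx u v) (hz s t) (hc u v s t) (hxc u v s t h))
  have E5 : ∀ u v s t, Dist4 u v s t →
      (wOf (fx u v) + wOf (fx s t)) + (wOf (fx v s) + wOf (fx u t))
        + (wOf (fx s u) + wOf (fx v t)) = 0 := by
    intro u v s t h
    have h5 := triple_W (hb u v s t) (hb v s u t) (hb s u v t) (hbbb u v s t h)
    rwa [E3 u v s t h, E3 v s u t (dist4_perm1 h), E3 s u v t (dist4_perm2 h)] at h5
  have E6 : ∀ u v s t, Dist4 u v s t →
      (wOf (fx u v) + wOf (fz s t)) + (wOf (fx v s) + wOf (fz u t))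
        + (wOf (fx s u) + wOf (fz v t)) = 0 := by
    intro u v s t h
    have h6 := triple_W (hc u v s t) (hc v s u t) (hc s u v t) (hccc u v s t h)
    rwa [E4 u v s t h, E4 v s u t (dist4_perm1 h), E4 s u v t (dist4_perm2 h)] at h6
  have EY : ∀ u v s t, Dist4 u v s t →
      wOf (fy s t) + wOf (fy u t) + wOf (fy v t) = 0 := by
    intro u v s t h
    have h6 := E6 u v s t h
    rw [E2 s t h.2.2.2.2.2, E2 u t h.2.2.1, E2 v t h.2.2.2.2.1] at h6
    have h5 := E5 u v s t h
    have key : wOf (fy s t) + wOf (fy u t) + wOf (fy v t)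
        = -((wOf (fx u v) + wOf (fx s t)) + (wOf (fx v s) + wOf (fx u t))
            + (wOf (fx s u) + wOf (fx v t)))
          + ((wOf (fx u v) + (wOf (fx s t) + wOf (fy s t)))
            + (wOf (fx v s) + (wOf (fx u t) + wOf (fy u t)))
            + (wOf (fx s u) + (wOf (fx v t) + wOf (fy v t)))) := by abel
    rw [h5, h6] at key
    simpa using key
  have Equad : ∀ u v s t, Dist4 u v s t →
      wOf (fa s) + wOf (fa u) + wOf (fa v) + wOf (fa t) = 0 := by
    intro u v s t h
    have hY := EY u v s t h
    rw [E1 s t h.2.2.2.2.2, E1 u t h.2.2.1, E1 v t h.2.2.2.2.1] at hY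
    have key : wOf (fa s) + wOf (fa u) + wOf (fa v) + wOf (fa t)
        = ((wOf (fa s) + wOf (fa t)) + (wOf (fa u) + wOf (fa t))
            + (wOf (fa v) + wOf (fa t))) - (wOf (fa t) + wOf (fa t)) := by abel
    rw [hY, wOf_add_self] at key
    simpa using key
  have waEq : ∀ p q : Fin n, wOf (fa p) = wOf (fa q) := by
    intro p q
    obtain ⟨u, v, s, huv, hus, hvs, hup, huq, hvp, hvq, hsp, hsq⟩ := pick3 hn p q
    have h1 := Equad u v s p ⟨huv, hus, hup, hvs, hvp, hsp⟩
    have h2 := Equad u v s q ⟨huv, hus, huq, hvs, hvq, hsq⟩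
    have key : wOf (fa p)
        = (wOf (fa s) + wOf (fa u) + wOf (fa v) + wOf (fa p))
          - (wOf (fa s) + wOf (fa u) + wOf (fa v) + wOf (fa q)) + wOf (fa q) := by abel
    rw [h1, h2] at key
    simpa using key
  -- y is a scalar matrix
  have hyscalar : ∀ u v : Fin n, u ≠ v → y u v = sy u v • 1 := by
    intro u v h
    have h0 : wOf (fy u v) = 0 := by
      rw [E1 u v h, waEq u v]
      exact wOf_add_self _
    have hf : fy u v = fun _ => 0 := by
      funext i
      exact (toW_eq_zero (fy u v i)).mp (congrFun h0 i)
    rw [hy u v, hf, Pstr_zero]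
  -- matrix-level facts
  have sqa : ∀ v, a v * a v = 1 := fun v => pauli_str_sq (hPa v)
  have sqx : ∀ u v, x u v * x u v = 1 := fun u v => pauli_str_sq (hPxyz u v).1
  have hsy2 : ∀ u v, sy u v * sy u v = 1 := by
    intro u v; rcases hsy u v with h | h <;> rw [h] <;> norm_num
  have smul3 : ∀ (r s t : ℂ) (A B C : Matrix (Fin m → Fin 2) (Fin m → Fin 2) ℂ),
      (r • A) * (s • B) * (t • C) = (r * s * t) • (A * B * C) := by
    intro r s t A B C
    simp only [smul_mul_assoc, mul_smul_comm, smul_smul, mul_assoc]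
    congr 1
    ring
  have scalar_one : ∀ k : ℂ,
      k • (1 : Matrix (Fin m → Fin 2) (Fin m → Fin 2) ℂ) = 1 → k = 1 := by
    intro k hk
    have h := congrFun (congrFun hk (fun _ => 0)) (fun _ => 0)
    rw [Matrix.smul_apply, Matrix.one_apply_eq, smul_eq_mul, mul_one] at h
    exact h
  have haa : ∀ u v, u ≠ v → a u * a v = sy u v • 1 := by
    intro u v h
    have h1 := hay u v h
    rw [hyscalar u v h] at h1
    have h2 : sy u v • (a u * a v) = 1 := by
      rw [← h1, mul_smul_comm, mul_one]
    calc a u * a v = (sy u v * sy u v) • (a u * a v) := by rw [hsy2, one_smul]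
      _ = sy u v • (sy u v • (a u * a v)) := by rw [smul_smul]
      _ = sy u v • 1 := by rw [h2]
  have hzx : ∀ u v, u ≠ v → z u v = sy u v • x u v := by
    intro u v h
    have h1 := hxyz u v h
    rw [hyscalar u v h] at h1
    have h2 : sy u v • (x u v * z u v) = 1 := by
      rw [← h1, mul_smul_comm, mul_one, smul_mul_assoc]
    have h3 : x u v * z u v = sy u v • 1 := by
      calc x u v * z u v = (sy u v * sy u v) • (x u v * z u v) := by rw [hsy2, one_smul]
        _ = sy u v • 1 := by rw [← smul_smul, h2]
    calc z u v = (x u v * x u v) * z u v := by rw [sqx, one_mul]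
      _ = x u v * (x u v * z u v) := by rw [mul_assoc]
      _ = x u v * (sy u v • 1) := by rw [h3]
      _ = sy u v • x u v := by rw [mul_smul_comm, mul_one]
  have hcb : ∀ u v s t, Dist4 u v s t → c u v s t = sy s t • b u v s t := by
    intro u v s t h
    have h1 := hxc u v s t h
    rw [hzx s t h.2.2.2.2.2] at h1
    have h2 : x u v * x s t * c u v s t = sy s t • 1 := by
      have h2' : sy s t • (x u v * x s t * c u v s t) = 1 := by
        rw [← h1, mul_smul_comm, smul_mul_assoc]
      calc x u v * x s t * c u v s t
          = (sy s t * sy s t) • (x u v * x s t * c u v s t) := by rw [hsy2, one_smul]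
        _ = sy s t • 1 := by rw [← smul_smul, h2']
    have hbM' : b u v s t * (x u v * x s t) = 1 :=
      mul_eq_one_comm.mp (hxb u v s t h)
    calc c u v s t = 1 * c u v s t := (one_mul _).symm
      _ = (b u v s t * (x u v * x s t)) * c u v s t := by rw [hbM']
      _ = b u v s t * (x u v * x s t * c u v s t) := by rw [mul_assoc]
      _ = b u v s t * (sy s t • 1) := by rw [h2]
      _ = sy s t • b u v s t := by rw [mul_smul_comm, mul_one]
  have hsy3 : ∀ u v s t, Dist4 u v s t → sy s t * sy u t * sy v t = 1 := by
    intro u v s t h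
    have h1 := hccc u v s t h
    rw [hcb u v s t h, hcb v s u t (dist4_perm1 h), hcb s u v t (dist4_perm2 h),
      smul3, hbbb u v s t h] at h1
    exact scalar_one _ h1
  have haquad : ∀ u v s t, Dist4 u v s t → a s * a u * a v * a t = 1 := by
    intro u v s t h
    have h1 := haa s t h.2.2.2.2.2
    have h2 := haa u t h.2.2.1
    have h3 := haa v t h.2.2.2.2.1
    have step1 : (a s * a t) * (a u * a t) = a s * a u := by
      rw [mul_assoc, ← mul_assoc (a t), (hcaa t u).eq, mul_assoc (a u), sqa t, mul_one]
    calc a s * a u * a v * a t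
        = (a s * a u) * (a v * a t) := by rw [mul_assoc]
      _ = ((a s * a t) * (a u * a t)) * (a v * a t) := by rw [step1]
      _ = (sy s t • 1) * (sy u t • 1) * (sy v t • 1) := by rw [h1, h2, h3]
      _ = (sy s t * sy u t * sy v t) • (1 * 1 * 1) := smul3 _ _ _ _ _ _
      _ = 1 := by rw [hsy3 u v s t h]; simp
  have haEq : ∀ p q : Fin n, a p = a q := by
    intro p q
    by_cases hpq : p = q
    · rw [hpq]
    obtain ⟨u, v, s, huv, hus, hvs, hup, huq, hvp, hvq, hsp, hsq⟩ := pick3 hn p q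
    have h1 := haquad u v s p ⟨huv, hus, hup, hvs, hvp, hsp⟩
    have h2 := haquad u v s q ⟨huv, hus, huq, hvs, hvq, hsq⟩
    have h1' : a p * (a s * a u * a v) = 1 := mul_eq_one_comm.mp h1
    calc a p = a p * 1 := (mul_one _).symm
      _ = a p * (a s * a u * a v * a q) := by rw [h2]
      _ = (a p * (a s * a u * a v)) * a q := by rw [← mul_assoc]
      _ = 1 * a q := by rw [h1']
      _ = a q := one_mul _
  -- final contradiction
  have hv0 : (0 : ℕ) < n := by omega
  set A : Matrix (Fin m → Fin 2) (Fin m → Fin 2) ℂ := a ⟨0, hv0⟩ with hA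
  have hconst : (fun v : Fin n => a v) = fun _ => A := funext fun v => haEq v ⟨0, hv0⟩
  rw [hconst, List.ofFn_const, List.prod_replicate] at hprod
  obtain ⟨k, hk⟩ := heven
  rw [hk, ← two_mul, pow_mul, pow_two, sqa, one_pow] at hprod
  have hent := congrFun (congrFun hprod (fun _ => 0)) (fun _ => 0)
  rw [Matrix.one_apply_eq, Matrix.neg_apply, Matrix.one_apply_eq] at hent
  norm_num at hent
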